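/- Let D ≥ 1 and N ≥ 1 be integers, let η > 0, and for j = 1, …, N let w_j ∈ ℝ^D with all coordinates strictly positive and g_j ∈ ℝ^D. Then the function F(z) = Σ_{j=1}^N (η·⟨g_j, z − w_j⟩ + Σ_{d=1}^D z_d·ln z_d − Σ_{d=1}^D (w_j)_d·ln (w_j)_d − ⟨ln w_j + 1, z − w_j⟩), defined for z ∈ ℝ^D with all coordinates strictly positive (where ln w_j and 1 denote the coordinatewise logarithm and the all-ones vector), attains its unique minimum over the positive orthant at the point z* whose d-th coordinate is z*_d = (∏_{j=1}^N (w_j)_d·e^{−η·(g_j)_d})^{1/N}. -/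

import Mathlib

/-!
Write `B(s, t) = t log t - s log s - (log s + 1)(t - s)` for the Bregman divergence of the
scalar negative entropy. Coordinatewise, the objective is
`Σ_j (η (g_j)_d (z - (w_j)_d) + B((w_j)_d, z))`, and the choice
`N log z*_d = Σ_j (log (w_j)_d - η (g_j)_d)` makes the terms linear in `z` cancel, leaving
the three-point identity `F z - F z* = N Σ_d B(z*_d, z_d)`. Since
`B(s, t) = s · klFun (t / s)` and `klFun` vanishes only at `1`, the minimum at `z*` is strict.
-/

open Real InformationTheory Finset

noncomputable def negEntropyBregman (s t : ℝ) : ℝ :=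
  t * log t - s * log s - (log s + 1) * (t - s)

lemma negEntropyBregman_eq_mul_klFun {s t : ℝ} (hs : 0 < s) (ht : 0 < t) :
    negEntropyBregman s t = s * klFun (t / s) := by
  rw [negEntropyBregman, klFun_apply, log_div ht.ne' hs.ne']
  field_simp
  ring

lemma negEntropyBregman_nonneg {s t : ℝ} (hs : 0 < s) (ht : 0 < t) :
    0 ≤ negEntropyBregman s t := by
  rw [negEntropyBregman_eq_mul_klFun hs ht]
  exact mul_nonneg hs.le (klFun_nonneg (div_pos ht hs).le)

lemma negEntropyBregman_pos {s t : ℝ} (hs : 0 < s) (ht : 0 < t) (hne : t ≠ s) :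
    0 < negEntropyBregman s t := by
  refine (negEntropyBregman_nonneg hs ht).lt_of_ne' ?_
  rw [negEntropyBregman_eq_mul_klFun hs ht, mul_ne_zero_iff]
  refine ⟨hs.ne', fun h => hne ?_⟩
  exact (div_eq_one_iff_eq hs.ne').mp ((klFun_eq_zero_iff (div_pos ht hs).le).mp h)

lemma sum_linear_add_negEntropyBregman_sub {ι : Type*} [Fintype ι] (c w : ι → ℝ) {zs : ℝ}
    (hzs : Fintype.card ι * log zs = ∑ j, (log (w j) - c j)) (z : ℝ) :
    ∑ j, (c j * (z - w j) + negEntropyBregman (w j) z)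
      - ∑ j, (c j * (zs - w j) + negEntropyBregman (w j) zs)
      = Fintype.card ι * negEntropyBregman zs z := by
  have hcoef : ∑ j, (c j - log (w j) - 1) = -(Fintype.card ι * log zs) - Fintype.card ι := by
    rw [hzs, ← sum_neg_distrib, ← card_univ, ← nsmul_one, ← sum_const, ← sum_sub_distrib]
    exact sum_congr rfl fun j _ => by ring
  calc _ = ∑ j, ((c j - log (w j) - 1) * (z - zs) + (z * log z - zs * log zs)) := by
          rw [← sum_sub_distrib]
          exact sum_congr rfl fun j _ => by unfold negEntropyBregman; ring
    _ = _ := by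
          rw [sum_add_distrib, ← sum_mul, hcoef, sum_const, card_univ, nsmul_eq_mul,
            negEntropyBregman]
          ring

lemma mul_log_rpow_inv_prod {ι : Type*} [Fintype ι] {x : ι → ℝ} (hx : ∀ j, 0 < x j)
    (hι : Fintype.card ι ≠ 0) :
    Fintype.card ι * log ((∏ j, x j) ^ (1 / (Fintype.card ι : ℝ))) = ∑ j, log (x j) := by
  rw [log_rpow (prod_pos fun j _ => hx j), log_prod fun j _ => (hx j).ne']
  field_simp

theorem stmt_15_general (D N : ℕ) (hN : 1 ≤ N) (η : ℝ)
    (w g : Fin N → Fin D → ℝ) (hw : ∀ j d, 0 < w j d)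
    (F : (Fin D → ℝ) → ℝ)
    (hF : ∀ z, F z = ∑ j, (η * ∑ d, g j d * (z d - w j d)
        + ∑ d, z d * Real.log (z d) - ∑ d, w j d * Real.log (w j d)
        - ∑ d, (Real.log (w j d) + 1) * (z d - w j d)))
    (zs : Fin D → ℝ)
    (hzs : ∀ d, zs d = (∏ j, w j d * Real.exp (-η * g j d)) ^ (1 / (N : ℝ))) :
    (∀ d, 0 < zs d) ∧
    (∀ z : Fin D → ℝ, (∀ d, 0 < z d) → F zs ≤ F z) ∧
    (∀ z : Fin D → ℝ, (∀ d, 0 < z d) → z ≠ zs → F zs < F z) := by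
  have hstep : ∀ j d, 0 < w j d * exp (-η * g j d) := fun j d => mul_pos (hw j d) (exp_pos _)
  have hzs_pos : ∀ d, 0 < zs d := fun d =>
    hzs d ▸ rpow_pos_of_pos (prod_pos fun j _ => hstep j d) _
  have hlog : ∀ d, Fintype.card (Fin N) * log (zs d) = ∑ j, (log (w j d) - η * g j d) := by
    intro d
    have hgeom := mul_log_rpow_inv_prod (hstep · d) (by rw [Fintype.card_fin]; omega)
    rw [Fintype.card_fin] at hgeom
    rw [hzs d, Fintype.card_fin, hgeom]
    exact sum_congr rfl fun j _ => by rw [log_mul (hw j d).ne' (exp_pos _).ne', log_exp]; ring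
  have hdiff : ∀ z, F z - F zs = ∑ d, (N : ℝ) * negEntropyBregman (zs d) (z d) := by
    intro z
    have hF' : ∀ z, F z =
        ∑ d, ∑ j, (η * g j d * (z d - w j d) + negEntropyBregman (w j d) (z d)) := by
      intro z
      rw [hF z, sum_comm]
      refine sum_congr rfl fun j _ => ?_
      simp only [mul_sum, ← sum_sub_distrib, ← sum_add_distrib, negEntropyBregman]
      exact sum_congr rfl fun d _ => by ring
    rw [hF', hF', ← sum_sub_distrib]
    refine sum_congr rfl fun d _ => ?_
    rw [sum_linear_add_negEntropyBregman_sub _ _ (hlog d), Fintype.card_fin]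
  have hN_pos : (0 : ℝ) < N := by exact_mod_cast hN
  refine ⟨hzs_pos, fun z hz => ?_, fun z hz hne => ?_⟩
  · refine sub_nonneg.mp (hdiff z ▸ sum_nonneg fun d _ => ?_)
    exact mul_nonneg hN_pos.le (negEntropyBregman_nonneg (hzs_pos d) (hz d))
  · obtain ⟨d₀, hd₀⟩ := Function.ne_iff.mp hne
    refine sub_pos.mp (hdiff z ▸ sum_pos' (fun d _ => ?_) ⟨d₀, mem_univ _, ?_⟩)
    · exact mul_nonneg hN_pos.le (negEntropyBregman_nonneg (hzs_pos d) (hz d))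
    · exact mul_pos hN_pos (negEntropyBregman_pos (hzs_pos d₀) (hz d₀) hd₀)

/-- Closed-form update rule of Distributed Online Exponentiated Gradient
(DOEG): with the unnormalized relative entropy as proximity function, the joint
mirror-descent objective attains its unique minimum over the positive orthant
at the coordinatewise geometric mean `z*_d = (∏_j (w_j)_d e^{-η (g_j)_d})^{1/N}`. -/
theorem stmt_15 (D N : ℕ) (hD : 1 ≤ D) (hN : 1 ≤ N) (η : ℝ) (hη : 0 < η)
    (w g : Fin N → Fin D → ℝ) (hw : ∀ j d, 0 < w j d)
    (F : (Fin D → ℝ) → ℝ)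
    (hF : ∀ z, F z = ∑ j, (η * ∑ d, g j d * (z d - w j d)
        + ∑ d, z d * Real.log (z d) - ∑ d, w j d * Real.log (w j d)
        - ∑ d, (Real.log (w j d) + 1) * (z d - w j d)))
    (zs : Fin D → ℝ)
    (hzs : ∀ d, zs d = (∏ j, w j d * Real.exp (-η * g j d)) ^ (1 / (N : ℝ))) :
    (∀ d, 0 < zs d) ∧
    (∀ z : Fin D → ℝ, (∀ d, 0 < z d) → F zs ≤ F z) ∧
    (∀ z : Fin D → ℝ, (∀ d, 0 < z d) → z ≠ zs → F zs < F z) :=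
  stmt_15_general D N hN η w g hw F hF zs hzs
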